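/- The set of abscissas of local maxima of the Knopp function F on (0,1) is exactly S = { k/2^N + 1/(3·2^N), k/2^N + 2/(3·2^N) : N ∈ ℕ, k ∈ ℕ, with the point in (0,1) }. -/

import Mathlib

open Real MeasureTheory Filter Topology

noncomputable def phi (x : ℝ) : ℝ := |x - round x|

noncomputable def Knopp (α : ℝ) (x : ℝ) : ℝ :=
  ∑' j : ℕ, (2:ℝ) ^ (-(α * (j:ℝ))) * phi ((2:ℝ) ^ j * x)
def inS (x : ℝ) : Prop :=
  (∃ k N : ℕ, x = (k:ℝ)/2^N + 1/(3*2^N) ∨ x = (k:ℝ)/2^N + 2/(3*2^N)) ∧ x ∈ Set.Ioo (0:ℝ) 1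

/-!
With `b = 2^{-α} ∈ (1/2, 1)` the Knopp function is the Takagi–Landsberg function
`f x = ∑ b^j φ(2^j x)`; it is even, `1`-periodic and satisfies `f x = φ x + b f (2x)`. The key inequality is `f t + l (1/3 - φ t) ≤ f (1/3)` for
`l ∈ [0, 1]`: its defect at `(t, l)` is at least `b` times its defect at `(2t, (1 - l)/(2b))`, and
equality forces `φ (2t) = 1/3`.

On a dyadic interval of length `2^{-n}`, `f` is an affine function plus `b^n f` of the rescaled
variable. So if `x` is a local maximum, `t = fract (2^n x)` maximises `f s + c s` on `[0, 1]` for some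
`c`. For `c ∈ [0, 1]`, comparing with `s = 2/3` gives equality in the key inequality, hence
`φ (2t) = 1/3`; for `c > 1` the maximiser lies in the right half and doubling it lowers the slope by
at least `1`; `s ↦ 1 - s` handles `c < 0`.

Conversely, two steps of the functional equation give
`f (1/3 + h) - f (1/3) = (1 - 2b) h + b² (f (1/3 + 4h) - f (1/3))`, and since `4b² > 1` the decay of
`f` away from `1/3` is faster than linear; at `x` with `φ (2^N x) = 1/3` it beats the Lipschitz
first `N` terms of the series.
-/

open Set

lemma phi_nonneg (x : ℝ) : 0 ≤ phi x := abs_nonneg _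

lemma phi_le_half (x : ℝ) : phi x ≤ 1 / 2 := abs_sub_round x

lemma phi_add_int (x : ℝ) (n : ℤ) : phi (x + n) = phi x := by
  simp only [phi, round_add_intCast, Int.cast_add]
  ring_nf

lemma phi_neg (x : ℝ) : phi (-x) = phi x := by
  simp only [phi, abs_sub_round_eq_min]
  by_cases h : Int.fract x = 0
  · rw [Int.fract_neg_eq_zero.2 h, h]
  · rw [Int.fract_neg h, min_comm, sub_sub_cancel]

lemma phi_int_sub (n : ℤ) (x : ℝ) : phi (n - x) = phi x := by
  rw [sub_eq_neg_add, phi_add_int, phi_neg]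

lemma phi_eq_min {x : ℝ} (hx : x ∈ Icc (0 : ℝ) 1) : phi x = min x (1 - x) := by
  rcases hx.2.eq_or_lt with rfl | h
  · norm_num [phi]
  · rw [phi, abs_sub_round_eq_min, Int.fract_eq_self.2 ⟨hx.1, h⟩]

lemma phi_of_le_half {x : ℝ} (h0 : 0 ≤ x) (h : x ≤ 1 / 2) : phi x = x := by
  rw [phi_eq_min ⟨h0, by linarith⟩, min_eq_left (by linarith)]

lemma phi_of_half_le {x : ℝ} (h : 1 / 2 ≤ x) (h1 : x ≤ 1) : phi x = 1 - x := by
  rw [phi_eq_min ⟨by linarith, h1⟩, min_eq_right (by linarith)]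

lemma phi_sub_phi_le (x y : ℝ) : phi x - phi y ≤ |x - y| := by
  have : phi x ≤ |x - y| + phi y :=
    calc phi x ≤ |x - round y| := round_le x (round y)
      _ = |(x - y) + (y - round y)| := by ring_nf
      _ ≤ |x - y| + phi y := abs_add_le _ _
  linarith

lemma phi_add_phi_two_mul_le (x : ℝ) : phi x + phi (2 * x) / 2 ≤ 1 / 2 := by
  have h2 : phi (2 * x) = phi (2 * Int.fract x) := by
    rw [← phi_add_int (2 * Int.fract x) (2 * ⌊x⌋), Int.fract]
    push_cast; ring_nf
  have h1 : phi x = min (Int.fract x) (1 - Int.fract x) := abs_sub_round_eq_min x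
  have h3 : phi (2 * Int.fract x) ≤ |2 * Int.fract x - 1| := by
    simpa [phi] using round_le (2 * Int.fract x) 1
  rw [h1, h2]
  rcases le_total (Int.fract x) (1 / 2) with h | h
  · rw [abs_of_nonpos (by linarith)] at h3
    linarith [min_le_left (Int.fract x) (1 - Int.fract x)]
  · rw [abs_of_nonneg (by linarith)] at h3
    linarith [min_le_right (Int.fract x) (1 - Int.fract x)]

/-- `φ(2^n x) - 1/3` is multiplied by `-2` at each step, and stays bounded. -/
lemma phi_eq_third_of_forall {x : ℝ}
    (h : ∀ n : ℕ, phi (2 ^ n * x) + phi (2 ^ (n + 1) * x) / 2 = 1 / 2) : phi x = 1 / 3 := by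
  have hgrow : ∀ n : ℕ, 2 ^ n * |phi x - 1 / 3| = |phi (2 ^ n * x) - 1 / 3| := by
    intro n
    induction n with
    | zero => simp
    | succ n ih =>
      rw [show phi (2 ^ (n + 1) * x) - 1 / 3 = -2 * (phi (2 ^ n * x) - 1 / 3) by linarith [h n],
        abs_mul, ← ih]
      norm_num [pow_succ]; ring
  have hle : ∀ n : ℕ, |phi x - 1 / 3| ≤ (1 / 2) ^ n := by
    intro n
    have := hgrow n
    have h0 := phi_nonneg (2 ^ n * x)
    have h1 := phi_le_half (2 ^ n * x)
    rw [div_pow, one_pow, le_div_iff₀ (by positivity), mul_comm, this, abs_le]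
    constructor <;> linarith
  have := ge_of_tendsto' (tendsto_pow_atTop_nhds_zero_of_lt_one (by norm_num : (0:ℝ) ≤ 1 / 2)
    (by norm_num)) hle
  linarith [abs_nonpos_iff.1 this]

noncomputable def takagiLandsberg (b x : ℝ) : ℝ := ∑' j : ℕ, b ^ j * phi (2 ^ j * x)

section Basic

variable {b : ℝ}

lemma summable_takagiLandsberg (hb : |b| < 1) (x : ℝ) :
    Summable fun j : ℕ => b ^ j * phi (2 ^ j * x) := by
  refine (summable_geometric_of_lt_one (abs_nonneg b) hb).of_norm_bounded fun j => ?_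
  rw [Real.norm_eq_abs, abs_mul, abs_pow, abs_of_nonneg (phi_nonneg _)]
  exact mul_le_of_le_one_right (by positivity) ((phi_le_half _).trans (by norm_num))

lemma takagiLandsberg_add_int (b x : ℝ) (n : ℤ) :
    takagiLandsberg b (x + n) = takagiLandsberg b x := by
  refine tsum_congr fun j => ?_
  rw [mul_add, ← phi_add_int (2 ^ j * x) (2 ^ j * n)]
  push_cast
  rfl

lemma takagiLandsberg_neg (b x : ℝ) : takagiLandsberg b (-x) = takagiLandsberg b x :=
  tsum_congr fun j => by rw [mul_neg, phi_neg]

lemma takagiLandsberg_one_sub (b x : ℝ) : takagiLandsberg b (1 - x) = takagiLandsberg b x := by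
  rw [sub_eq_neg_add, ← Int.cast_one, takagiLandsberg_add_int, takagiLandsberg_neg]

lemma takagiLandsberg_eq (hb : |b| < 1) (x : ℝ) :
    takagiLandsberg b x = phi x + b * takagiLandsberg b (2 * x) := by
  rw [takagiLandsberg, (summable_takagiLandsberg hb x).tsum_eq_zero_add, takagiLandsberg,
    ← tsum_mul_left]
  congr 1
  · simp
  · exact tsum_congr fun j => by rw [show (2 : ℝ) ^ (j + 1) * x = 2 ^ j * (2 * x) by ring]; ring

lemma takagiLandsberg_eq_sum_add (hb : |b| < 1) (x : ℝ) (n : ℕ) :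
    takagiLandsberg b x =
      ∑ j ∈ Finset.range n, b ^ j * phi (2 ^ j * x) + b ^ n * takagiLandsberg b (2 ^ n * x) := by
  induction n with
  | zero => simp
  | succ n ih =>
    rw [ih, Finset.sum_range_succ, takagiLandsberg_eq hb (2 ^ n * x),
      show (2 : ℝ) * (2 ^ n * x) = 2 ^ (n + 1) * x by ring]
    ring

lemma takagiLandsberg_sub_le (hb0 : 0 ≤ b) (hb : b < 1) (x y : ℝ) (n : ℕ) :
    takagiLandsberg b y - takagiLandsberg b x ≤ (∑ j ∈ Finset.range n, (2 * b) ^ j) * |y - x|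
      + b ^ n * (takagiLandsberg b (2 ^ n * y) - takagiLandsberg b (2 ^ n * x)) := by
  have hb' : |b| < 1 := abs_lt.2 ⟨by linarith, hb⟩
  rw [takagiLandsberg_eq_sum_add hb' y n, takagiLandsberg_eq_sum_add hb' x n, Finset.sum_mul]
  have hterm : ∀ j ∈ Finset.range n,
      b ^ j * phi (2 ^ j * y) - b ^ j * phi (2 ^ j * x) ≤ (2 * b) ^ j * |y - x| := by
    intro j _
    have := phi_sub_phi_le (2 ^ j * y) (2 ^ j * x)
    rw [← mul_sub, abs_mul, abs_of_pos (by positivity)] at this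
    rw [← mul_sub, mul_pow, mul_comm (2 ^ j) (b ^ j), mul_assoc]
    exact mul_le_mul_of_nonneg_left this (by positivity)
  have := Finset.sum_le_sum hterm
  rw [Finset.sum_sub_distrib] at this
  linarith

lemma takagiLandsberg_nonneg (hb0 : 0 ≤ b) (x : ℝ) : 0 ≤ takagiLandsberg b x :=
  tsum_nonneg fun j => mul_nonneg (pow_nonneg hb0 j) (phi_nonneg _)

lemma takagiLandsberg_le (hb0 : 0 ≤ b) (hb : b < 1) (x : ℝ) :
    takagiLandsberg b x ≤ (1 - b)⁻¹ / 2 := by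
  rw [← tsum_geometric_of_lt_one hb0 hb, ← tsum_div_const]
  refine (summable_takagiLandsberg (abs_lt.2 ⟨by linarith, hb⟩) x).tsum_le_tsum (fun j => ?_)
    ((summable_geometric_of_lt_one hb0 hb).div_const 2)
  have := mul_le_mul_of_nonneg_left (phi_le_half (2 ^ j * x)) (pow_nonneg hb0 j)
  linarith

lemma takagiLandsberg_div_two (hb : |b| < 1) {u : ℝ} (hu : u ∈ Icc (0 : ℝ) 1) :
    takagiLandsberg b (u / 2) = u / 2 + b * takagiLandsberg b u := by
  rw [takagiLandsberg_eq hb, phi_of_le_half (by linarith [hu.1]) (by linarith [hu.2]),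
    mul_div_cancel₀ u two_ne_zero]

lemma takagiLandsberg_one_add_div_two (hb : |b| < 1) {u : ℝ} (hu : u ∈ Icc (0 : ℝ) 1) :
    takagiLandsberg b ((1 + u) / 2) = (1 - u) / 2 + b * takagiLandsberg b u := by
  rw [takagiLandsberg_eq hb, phi_of_half_le (by linarith [hu.1]) (by linarith [hu.2]),
    mul_div_cancel₀ _ two_ne_zero, add_comm 1 u, ← Int.cast_one, takagiLandsberg_add_int]
  ring

lemma takagiLandsberg_two_thirds (b : ℝ) : takagiLandsberg b (2 / 3) = takagiLandsberg b (1 / 3) := by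
  rw [← takagiLandsberg_one_sub]; norm_num

lemma takagiLandsberg_third (hb : |b| < 1) :
    takagiLandsberg b (1 / 3) = 1 / 3 + b * takagiLandsberg b (1 / 3) := by
  conv_lhs => rw [takagiLandsberg_eq hb, phi_of_le_half (by norm_num) (by norm_num)]
  norm_num [takagiLandsberg_two_thirds]

end Basic

section Gap

variable {b : ℝ}

noncomputable def thirdGap (b l t : ℝ) : ℝ :=
  takagiLandsberg b (1 / 3) - takagiLandsberg b t - l * (1 / 3 - phi t)

lemma thirdGap_eq (hb0 : 0 < b) (hb : b < 1) (l t : ℝ) :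
    thirdGap b l t = b * thirdGap b ((1 - l) / (2 * b)) (2 * t)
      + (1 - l) * (1 / 2 - phi t - phi (2 * t) / 2) := by
  have hb' : |b| < 1 := abs_lt.2 ⟨by linarith, hb⟩
  have hl : b * ((1 - l) / (2 * b)) = (1 - l) / 2 := by field_simp
  simp only [thirdGap]
  linear_combination takagiLandsberg_third hb' - takagiLandsberg_eq hb' t
    + (1 / 3 - phi (2 * t)) * hl

lemma one_sub_div_two_mul_mem_Icc (hb : 1 / 2 < b) {l : ℝ} (hl : l ∈ Icc (0 : ℝ) 1) :
    (1 - l) / (2 * b) ∈ Icc (0 : ℝ) 1 :=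
  ⟨div_nonneg (by linarith [hl.2]) (by linarith),
    (div_le_one (by linarith)).2 (by linarith [hl.1])⟩

lemma one_sub_div_two_mul_lt_one (hb : 1 / 2 < b) {l : ℝ} (hl : 0 ≤ l) :
    (1 - l) / (2 * b) < 1 :=
  (div_lt_one (by linarith)).2 (by linarith)

/-- By `thirdGap_eq`, a lower bound `-B` for the gap improves to `-b B`, hence to `-b^n B`. -/
lemma thirdGap_nonneg (hb : 1 / 2 < b) (hb1 : b < 1) {l : ℝ} (hl : l ∈ Icc (0 : ℝ) 1) (t : ℝ) :
    0 ≤ thirdGap b l t := by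
  have hb0 : 0 < b := by linarith
  set B := (1 - b)⁻¹ / 2 + 1 / 3 with hB
  have hbound : ∀ n : ℕ, ∀ l ∈ Icc (0 : ℝ) 1, ∀ t, -(b ^ n * B) ≤ thirdGap b l t := by
    intro n
    induction n with
    | zero =>
      intro l hl t
      have h1 := takagiLandsberg_le hb0.le hb1 t
      have h2 := takagiLandsberg_nonneg hb0.le (1 / 3)
      have h3 := mul_le_mul_of_nonneg_left (by linarith [phi_nonneg t] : 1 / 3 - phi t ≤ 1 / 3) hl.1
      simp only [thirdGap, pow_zero, one_mul]
      linarith [hl.2, hB]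
    | succ n ih =>
      intro l hl t
      have h1 := ih _ (one_sub_div_two_mul_mem_Icc hb hl) (2 * t)
      have h2 : 0 ≤ (1 - l) * (1 / 2 - phi t - phi (2 * t) / 2) :=
        mul_nonneg (by linarith [hl.2]) (by linarith [phi_add_phi_two_mul_le t])
      rw [thirdGap_eq hb0 hb1, pow_succ']
      nlinarith
  have hlim : Tendsto (fun n : ℕ => -(b ^ n * B)) atTop (𝓝 0) := by
    simpa using ((tendsto_pow_atTop_nhds_zero_of_lt_one hb0.le hb1).mul_const B).neg
  exact le_of_tendsto' hlim fun n => hbound n l hl t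

lemma thirdGap_eq_zero_two_mul (hb : 1 / 2 < b) (hb1 : b < 1) {l t : ℝ}
    (hl : l ∈ Icc (0 : ℝ) 1) (h : thirdGap b l t = 0) :
    thirdGap b ((1 - l) / (2 * b)) (2 * t) = 0 ∧ (l < 1 → phi t + phi (2 * t) / 2 = 1 / 2) := by
  have hb0 : 0 < b := by linarith
  have h1 := thirdGap_nonneg hb hb1 (one_sub_div_two_mul_mem_Icc hb hl) (2 * t)
  have h2 : 0 ≤ 1 / 2 - phi t - phi (2 * t) / 2 := by linarith [phi_add_phi_two_mul_le t]
  rw [thirdGap_eq hb0 hb1] at h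
  obtain ⟨hg, hq⟩ := (add_eq_zero_iff_of_nonneg (mul_nonneg hb0.le h1)
    (mul_nonneg (by linarith [hl.2]) h2)).1 h
  refine ⟨(mul_eq_zero.1 hg).resolve_left hb0.ne', fun hl1 => ?_⟩
  linarith [(mul_eq_zero.1 hq).resolve_left (by linarith)]

lemma phi_two_mul_eq_third_of_thirdGap_eq_zero (hb : 1 / 2 < b) (hb1 : b < 1) {l t : ℝ}
    (hl : l ∈ Icc (0 : ℝ) 1) (h : thirdGap b l t = 0) : phi (2 * t) = 1 / 3 := by
  have hzero : ∀ n : ℕ, ∃ l' ∈ Ico (0 : ℝ) 1, thirdGap b l' (2 ^ n * (2 * t)) = 0 := by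
    intro n
    induction n with
    | zero =>
      have hl' := one_sub_div_two_mul_mem_Icc hb hl
      exact ⟨_, ⟨hl'.1, one_sub_div_two_mul_lt_one hb hl.1⟩,
        by simpa using (thirdGap_eq_zero_two_mul hb hb1 hl h).1⟩
    | succ n ih =>
      obtain ⟨l', hl', h'⟩ := ih
      have hl'' := one_sub_div_two_mul_mem_Icc hb (Ico_subset_Icc_self hl')
      refine ⟨_, ⟨hl''.1, one_sub_div_two_mul_lt_one hb hl'.1⟩, ?_⟩
      rw [pow_succ', mul_assoc]
      exact (thirdGap_eq_zero_two_mul hb hb1 (Ico_subset_Icc_self hl') h').1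
  refine phi_eq_third_of_forall fun n => ?_
  obtain ⟨l', hl', h'⟩ := hzero n
  rw [pow_succ', mul_assoc]
  exact (thirdGap_eq_zero_two_mul hb hb1 (Ico_subset_Icc_self hl') h').2 hl'.2

end Gap

section TiltedMax

variable {b c t : ℝ}

lemma isMaxOn_one_sub (hmax : IsMaxOn (fun s => takagiLandsberg b s + c * s) (Icc 0 1) t) :
    IsMaxOn (fun s => takagiLandsberg b s + -c * s) (Icc 0 1) (1 - t) := by
  refine isMaxOn_iff.2 fun s hs => ?_
  have := isMaxOn_iff.1 hmax (1 - s) ⟨by linarith [hs.2], by linarith [hs.1]⟩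
  simp only [takagiLandsberg_one_sub] at this ⊢
  linarith

lemma isMaxOn_two_mul_sub_one (hb0 : 0 < b) (hb1 : b < 1) (ht : t ∈ Icc (1 / 2) 1)
    (hmax : IsMaxOn (fun s => takagiLandsberg b s + c * s) (Icc 0 1) t) :
    IsMaxOn (fun s => takagiLandsberg b s + (c - 1) / (2 * b) * s) (Icc 0 1) (2 * t - 1) := by
  have hb' : |b| < 1 := abs_lt.2 ⟨by linarith, hb1⟩
  have hrescale : ∀ u ∈ Icc (0 : ℝ) 1, takagiLandsberg b ((1 + u) / 2) + c * ((1 + u) / 2) =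
      (1 + c) / 2 + b * (takagiLandsberg b u + (c - 1) / (2 * b) * u) := by
    intro u hu
    rw [takagiLandsberg_one_add_div_two hb' hu]
    field_simp
    ring
  have ht' : 2 * t - 1 ∈ Icc (0 : ℝ) 1 := ⟨by linarith [ht.1], by linarith [ht.2]⟩
  refine isMaxOn_iff.2 fun u hu => ?_
  have h := isMaxOn_iff.1 hmax ((1 + u) / 2) ⟨by linarith [hu.1], by linarith [hu.2]⟩
  have htu := hrescale _ ht'
  rw [show (1 + (2 * t - 1)) / 2 = t by ring] at htu
  rw [hrescale u hu, htu] at h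
  exact le_of_mul_le_mul_left (by linarith) hb0

lemma half_lt_of_isMaxOn (hb : 1 / 2 < b) (hb1 : b < 1) (hc : 1 < c) (ht : t ∈ Icc (0 : ℝ) 1)
    (hmax : IsMaxOn (fun s => takagiLandsberg b s + c * s) (Icc 0 1) t) : 1 / 2 < t := by
  by_contra! hle
  have hgap := thirdGap_nonneg hb hb1 ⟨zero_le_one, le_rfl⟩ t
  have h23 := isMaxOn_iff.1 hmax (2 / 3) ⟨by norm_num, by norm_num⟩
  simp only [thirdGap, takagiLandsberg_two_thirds, phi_of_le_half ht.1 hle] at hgap h23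
  nlinarith

lemma phi_two_mul_eq_third_of_isMaxOn (hb : 1 / 2 < b) (hb1 : b < 1) (hc : c ∈ Icc (0 : ℝ) 1)
    (ht : t ∈ Icc (0 : ℝ) 1) (hmax : IsMaxOn (fun s => takagiLandsberg b s + c * s) (Icc 0 1) t) :
    phi (2 * t) = 1 / 3 := by
  have h23 := isMaxOn_iff.1 hmax (2 / 3) ⟨by norm_num, by norm_num⟩
  have hphi : phi t ≤ 1 - t := by rw [phi_eq_min ht]; exact min_le_right _ _
  simp only [takagiLandsberg_two_thirds] at h23
  have hgap : thirdGap b c t ≤ 0 := by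
    simp only [thirdGap]
    nlinarith [mul_nonneg hc.1 (sub_nonneg.2 hphi)]
  exact phi_two_mul_eq_third_of_thirdGap_eq_zero hb hb1 hc
    (le_antisymm hgap (thirdGap_nonneg hb hb1 hc t))

lemma exists_phi_eq_third_of_isMaxOn (hb : 1 / 2 < b) (hb1 : b < 1) (ht : t ∈ Icc (0 : ℝ) 1)
    (hmax : IsMaxOn (fun s => takagiLandsberg b s + c * s) (Icc 0 1) t) :
    ∃ N : ℕ, phi (2 ^ N * t) = 1 / 3 := by
  have hb0 : 0 < b := by linarith
  suffices key : ∀ m : ℕ, ∀ c t : ℝ, 0 ≤ c → c ≤ m + 1 → t ∈ Icc (0 : ℝ) 1 →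
      IsMaxOn (fun s => takagiLandsberg b s + c * s) (Icc 0 1) t → ∃ N : ℕ, phi (2 ^ N * t) = 1 / 3 by
    rcases le_total 0 c with hc | hc
    · obtain ⟨m, hm⟩ := exists_nat_ge c
      exact key m c t hc (by linarith) ht hmax
    · obtain ⟨m, hm⟩ := exists_nat_ge (-c)
      obtain ⟨N, hN⟩ := key m (-c) (1 - t) (by linarith) (by linarith)
        ⟨by linarith [ht.2], by linarith [ht.1]⟩ (isMaxOn_one_sub hmax)
      refine ⟨N, ?_⟩
      rwa [show (2 : ℝ) ^ N * (1 - t) = ((2 ^ N : ℤ) : ℝ) - 2 ^ N * t by push_cast; ring,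
        phi_int_sub] at hN
  intro m
  induction m with
  | zero =>
    intro c t hc0 hc1 ht hmax
    exact ⟨1, by simpa using phi_two_mul_eq_third_of_isMaxOn hb hb1 ⟨hc0, by simpa using hc1⟩ ht hmax⟩
  | succ m ih =>
    intro c t hc0 hcm ht hmax
    rcases le_or_gt c 1 with hc1 | hc1
    · exact ⟨1, by simpa using phi_two_mul_eq_third_of_isMaxOn hb hb1 ⟨hc0, hc1⟩ ht hmax⟩
    have ht2 := half_lt_of_isMaxOn hb hb1 hc1 ht hmax
    have hc' : (c - 1) / (2 * b) ≤ c - 1 := div_le_self (by linarith) (by linarith)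
    obtain ⟨N, hN⟩ := ih ((c - 1) / (2 * b)) (2 * t - 1) (div_nonneg (by linarith) (by linarith))
      (by push_cast at hcm; linarith) ⟨by linarith, by linarith [ht.2]⟩
      (isMaxOn_two_mul_sub_one hb0 hb1 ⟨ht2.le, ht.2⟩ hmax)
    refine ⟨N + 1, ?_⟩
    rwa [show (2 : ℝ) ^ (N + 1) * t = 2 ^ N * (2 * t - 1) + ((2 ^ N : ℤ) : ℝ) by push_cast; ring,
      phi_add_int]

end TiltedMax

section LocalMax

variable {b : ℝ}

lemma exists_affine_decomposition (hb0 : 0 < b) (hb1 : b < 1) (n : ℕ) (k : ℤ) :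
    ∃ A c : ℝ, ∀ s ∈ Icc (0 : ℝ) 1,
      takagiLandsberg b ((k + s) / 2 ^ n) = A + b ^ n * (takagiLandsberg b s + c * s) := by
  have hb' : |b| < 1 := abs_lt.2 ⟨by linarith, hb1⟩
  induction n generalizing k with
  | zero => exact ⟨0, 0, fun s _ => by simp [add_comm (k : ℝ), takagiLandsberg_add_int]⟩
  | succ n ih =>
    obtain ⟨q, rfl | rfl⟩ := Int.even_or_odd' k
    · obtain ⟨A, c, h⟩ := ih q
      refine ⟨A, (c + 1) / (2 * b), fun s hs => ?_⟩
      have hs' : s / 2 ∈ Icc (0 : ℝ) 1 := ⟨by linarith [hs.1], by linarith [hs.2]⟩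
      rw [show ((2 * q : ℤ) + s) / (2 : ℝ) ^ (n + 1) = (q + s / 2) / 2 ^ n by
        push_cast; field_simp; ring, h _ hs', takagiLandsberg_div_two hb' hs]
      field_simp
      ring
    · obtain ⟨A, c, h⟩ := ih q
      refine ⟨A + b ^ n * (1 + c) / 2, (c - 1) / (2 * b), fun s hs => ?_⟩
      have hs' : (1 + s) / 2 ∈ Icc (0 : ℝ) 1 := ⟨by linarith [hs.1], by linarith [hs.2]⟩
      rw [show ((2 * q + 1 : ℤ) + s) / (2 : ℝ) ^ (n + 1) = (q + (1 + s) / 2) / 2 ^ n by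
        push_cast; field_simp; ring, h _ hs', takagiLandsberg_one_add_div_two hb' hs]
      field_simp
      ring

lemma exists_isMaxOn_of_isLocalMax (hb0 : 0 < b) (hb1 : b < 1) {x : ℝ}
    (hx : IsLocalMax (takagiLandsberg b) x) :
    ∃ (n : ℕ) (c : ℝ),
      IsMaxOn (fun s => takagiLandsberg b s + c * s) (Icc 0 1) (Int.fract (2 ^ n * x)) := by
  obtain ⟨ε, hε, hball⟩ := Metric.eventually_nhds_iff.1 hx
  obtain ⟨n, hn⟩ := exists_pow_lt_of_lt_one hε (by norm_num : (1 / 2 : ℝ) < 1)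
  obtain ⟨A, c, hdec⟩ := exists_affine_decomposition hb0 hb1 n ⌊2 ^ n * x⌋
  set t := Int.fract (2 ^ n * x)
  have ht : t ∈ Icc (0 : ℝ) 1 := ⟨Int.fract_nonneg _, (Int.fract_lt_one _).le⟩
  have hfx : takagiLandsberg b x = A + b ^ n * (takagiLandsberg b t + c * t) := by
    rw [← hdec t ht, Int.floor_add_fract]; field_simp
  refine ⟨n, c, isMaxOn_iff.2 fun s hs => ?_⟩
  have hclose : dist ((⌊2 ^ n * x⌋ + s) / 2 ^ n) x < ε := by
    have hst : |s - t| ≤ 1 := abs_le.2 ⟨by linarith [hs.1, ht.2], by linarith [hs.2, ht.1]⟩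
    have hdiff : (⌊2 ^ n * x⌋ + s) / 2 ^ n - x = (s - t) / 2 ^ n := by
      simp only [t, Int.fract]; field_simp; ring
    rw [Real.dist_eq, hdiff, abs_div, abs_of_pos (by positivity : (0 : ℝ) < 2 ^ n)]
    calc |s - t| / 2 ^ n ≤ 1 / 2 ^ n := by gcongr
      _ = (1 / 2) ^ n := by rw [div_pow, one_pow]
      _ < ε := hn
  have h := hball hclose
  rw [hdec s hs, hfx] at h
  exact le_of_mul_le_mul_left (by linarith) (pow_pos hb0 n)

lemma exists_phi_eq_third_of_isLocalMax (hb : 1 / 2 < b) (hb1 : b < 1) {x : ℝ}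
    (hx : IsLocalMax (takagiLandsberg b) x) : ∃ N : ℕ, phi (2 ^ N * x) = 1 / 3 := by
  obtain ⟨n, c, hmax⟩ := exists_isMaxOn_of_isLocalMax (by linarith) hb1 hx
  obtain ⟨N, hN⟩ := exists_phi_eq_third_of_isMaxOn hb hb1
    ⟨Int.fract_nonneg _, (Int.fract_lt_one _).le⟩ hmax
  refine ⟨N + n, ?_⟩
  rwa [show (2 : ℝ) ^ (N + n) * x = 2 ^ N * Int.fract (2 ^ n * x) + ((2 ^ N * ⌊2 ^ n * x⌋ : ℤ) : ℝ)
    by rw [Int.fract]; push_cast; ring, phi_add_int]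

lemma takagiLandsberg_third_add (hb : |b| < 1) {h : ℝ} (hh : |h| ≤ 1 / 12) :
    takagiLandsberg b (1 / 3 + h) =
      (1 / 3 + h) + b * (1 / 3 - 2 * h) + b ^ 2 * takagiLandsberg b (1 / 3 + 4 * h) := by
  obtain ⟨hh1, hh2⟩ := abs_le.1 hh
  rw [takagiLandsberg_eq hb, phi_of_le_half (by linarith) (by linarith),
    takagiLandsberg_eq hb (2 * (1 / 3 + h)), phi_of_half_le (by linarith) (by linarith),
    show 2 * (2 * (1 / 3 + h)) = 1 / 3 + 4 * h + ((1 : ℤ) : ℝ) by push_cast; ring,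
    takagiLandsberg_add_int]
  ring

lemma takagiLandsberg_le_third (hb : 1 / 2 < b) (hb1 : b < 1) (t : ℝ) :
    takagiLandsberg b t ≤ takagiLandsberg b (1 / 3) := by
  simpa [thirdGap] using thirdGap_nonneg hb hb1 ⟨le_rfl, zero_le_one⟩ t

/-- Each step of `takagiLandsberg_third_add` adds `2b - 1` to the slope of the decay at `1/3`. -/
lemma takagiLandsberg_third_add_sub_le (hb : 1 / 2 < b) (hb1 : b < 1) (K : ℕ) {h : ℝ}
    (hh : |h| ≤ 1 / (12 * 4 ^ K)) :
    takagiLandsberg b (1 / 3 + h) - takagiLandsberg b (1 / 3) ≤ min h 0 - K * (2 * b - 1) * |h| := by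
  have hb' : |b| < 1 := abs_lt.2 ⟨by linarith, hb1⟩
  have hM := takagiLandsberg_third hb'
  induction K generalizing h with
  | zero =>
    obtain ⟨hh1, hh2⟩ := abs_le.1 (by simpa using hh : |h| ≤ 1 / 12)
    have h1 := takagiLandsberg_eq hb' (1 / 3 + h)
    have h2 := takagiLandsberg_le_third hb hb1 (2 * (1 / 3 + h))
    rw [phi_of_le_half (by linarith) (by linarith)] at h1
    simp only [CharP.cast_eq_zero, zero_mul, sub_zero]
    exact le_min (by nlinarith) (by linarith [takagiLandsberg_le_third hb hb1 (1 / 3 + h)])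
  | succ K ih =>
    have h4 : |4 * h| ≤ 1 / (12 * 4 ^ K) := by
      rw [abs_mul, abs_of_pos (by norm_num : (0 : ℝ) < 4)]
      calc 4 * |h| ≤ 4 * (1 / (12 * 4 ^ (K + 1))) := by gcongr
        _ = 1 / (12 * 4 ^ K) := by rw [pow_succ]; field_simp
    have hstep := takagiLandsberg_third_add hb' (h := h)
      (hh.trans (by gcongr; exact le_mul_of_one_le_right (by norm_num) (one_le_pow₀ (by norm_num))))
    have hK := ih h4
    have h2b : 0 ≤ 2 * b - 1 := by linarith
    have h4b : 0 ≤ 4 * b ^ 2 - 1 := by nlinarith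
    have hKn : (0 : ℝ) ≤ K := K.cast_nonneg
    push_cast
    rcases le_or_gt 0 h with h0 | h0
    · rw [abs_of_nonneg h0, min_eq_right h0]
      rw [abs_of_nonneg (by linarith), min_eq_right (by linarith)] at hK
      nlinarith [mul_nonneg (mul_nonneg (mul_nonneg hKn h2b) h0) h4b]
    · rw [abs_of_neg h0, min_eq_left h0.le]
      rw [abs_of_neg (by linarith), min_eq_left (by linarith)] at hK
      nlinarith [mul_nonneg (mul_nonneg (neg_nonneg.2 h0.le) h2b) (add_nonneg h2b (mul_nonneg hKn h4b))]

lemma exists_takagiLandsberg_third_add_le (hb : 1 / 2 < b) (hb1 : b < 1) (C : ℝ) :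
    ∃ δ > 0, ∀ h : ℝ, |h| ≤ δ →
      takagiLandsberg b (1 / 3 + h) ≤ takagiLandsberg b (1 / 3) - C * |h| := by
  obtain ⟨K, hK⟩ := exists_nat_ge (C / (2 * b - 1))
  rw [div_le_iff₀ (by linarith)] at hK
  refine ⟨1 / (12 * 4 ^ K), by positivity, fun h hh => ?_⟩
  nlinarith [takagiLandsberg_third_add_sub_le hb hb1 K hh, min_le_right h 0,
    mul_le_mul_of_nonneg_right hK (abs_nonneg h)]

lemma takagiLandsberg_add_of_phi_eq_third (b : ℝ) {y : ℝ} (hy : phi y = 1 / 3) :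
    ∃ σ : ℝ, |σ| = 1 ∧ ∀ u, takagiLandsberg b (y + u) = takagiLandsberg b (1 / 3 + σ * u) := by
  rcases (abs_eq (by norm_num : (0 : ℝ) ≤ 1 / 3)).1 hy with h | h
  · refine ⟨1, abs_one, fun u => ?_⟩
    rw [show y + u = 1 / 3 + 1 * u + round y by linarith, takagiLandsberg_add_int]
  · refine ⟨-1, by simp, fun u => ?_⟩
    rw [show y + u = -(1 / 3 + -1 * u) + round y by linarith, takagiLandsberg_add_int,
      takagiLandsberg_neg]

lemma isLocalMax_of_phi_eq_third (hb : 1 / 2 < b) (hb1 : b < 1) {x : ℝ} {N : ℕ}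
    (hx : phi (2 ^ N * x) = 1 / 3) : IsLocalMax (takagiLandsberg b) x := by
  have hb0 : 0 < b := by linarith
  obtain ⟨σ, hσ, hshift⟩ := takagiLandsberg_add_of_phi_eq_third b hx
  set C := ∑ j ∈ Finset.range N, (2 * b) ^ j
  obtain ⟨δ, hδ, hdecay⟩ := exists_takagiLandsberg_third_add_le hb hb1 (C / (2 * b) ^ N)
  refine Metric.eventually_nhds_iff.2 ⟨δ / 2 ^ N, by positivity, fun y hy => ?_⟩
  rw [Real.dist_eq, lt_div_iff₀ (by positivity)] at hy
  have habs : |σ * (2 ^ N * (y - x))| = 2 ^ N * |y - x| := by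
    rw [abs_mul, hσ, one_mul, abs_mul, abs_of_pos (by positivity)]
  have hy' := hdecay _ (habs.trans_lt (by linarith)).le
  rw [← hshift, habs, show 2 ^ N * x + 2 ^ N * (y - x) = 2 ^ N * y by ring] at hy'
  have hx' : takagiLandsberg b (2 ^ N * x) = takagiLandsberg b (1 / 3) := by
    simpa using hshift 0
  have hscale : b ^ N * (C / (2 * b) ^ N * (2 ^ N * |y - x|)) = C * |y - x| := by
    rw [mul_pow]; field_simp
  have hlip := takagiLandsberg_sub_le hb0.le hb1 x y N
  rw [hx'] at hlip
  nlinarith [mul_le_mul_of_nonneg_left hy' (pow_nonneg hb0.le N)]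

lemma isLocalMax_takagiLandsberg_iff (hb : 1 / 2 < b) (hb1 : b < 1) {x : ℝ} :
    IsLocalMax (takagiLandsberg b) x ↔ ∃ N : ℕ, phi (2 ^ N * x) = 1 / 3 :=
  ⟨exists_phi_eq_third_of_isLocalMax hb hb1, fun ⟨_, hN⟩ => isLocalMax_of_phi_eq_third hb hb1 hN⟩

end LocalMax

lemma knopp_eq_takagiLandsberg (α : ℝ) : Knopp α = takagiLandsberg (2 ^ (-α)) := by
  funext x
  refine tsum_congr fun j => ?_
  rw [← Real.rpow_natCast ((2 : ℝ) ^ (-α)) j, ← Real.rpow_mul (by norm_num), neg_mul]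

lemma inS_iff {x : ℝ} (hx : x ∈ Ioo (0 : ℝ) 1) : inS x ↔ ∃ N : ℕ, phi (2 ^ N * x) = 1 / 3 := by
  constructor
  · rintro ⟨⟨k, N, h | h⟩, -⟩ <;> refine ⟨N, ?_⟩
    · rw [h, show (2 : ℝ) ^ N * (k / 2 ^ N + 1 / (3 * 2 ^ N)) = 1 / 3 + ((k : ℤ) : ℝ) by
        push_cast; field_simp; ring, phi_add_int, phi_of_le_half] <;> norm_num
    · rw [h, show (2 : ℝ) ^ N * (k / 2 ^ N + 2 / (3 * 2 ^ N)) = 2 / 3 + ((k : ℤ) : ℝ) by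
        push_cast; field_simp; ring, phi_add_int, phi_of_half_le] <;> norm_num
  · rintro ⟨N, hN⟩
    refine ⟨?_, hx⟩
    have hpos : 0 < 2 ^ N * x := mul_pos (by positivity) hx.1
    have h2N : (0 : ℝ) < 2 ^ N := by positivity
    rcases (abs_eq (by norm_num : (0 : ℝ) ≤ 1 / 3)).1 hN with h | h
    · have h0 : 0 ≤ round (2 ^ N * x) := by
        have : ((-1 : ℤ) : ℝ) < round (2 ^ N * x) := by push_cast; linarith
        have := Int.cast_lt.1 this
        omega
      lift round (2 ^ N * x) to ℕ using h0 with k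
      refine ⟨k, N, Or.inl ?_⟩
      push_cast at h
      field_simp
      linarith
    · have h0 : 0 ≤ round (2 ^ N * x) - 1 := by
        have : ((0 : ℤ) : ℝ) < round (2 ^ N * x) := by push_cast; linarith
        have := Int.cast_lt.1 this
        omega
      lift round (2 ^ N * x) - 1 to ℕ using h0 with k hk
      refine ⟨k, N, Or.inr ?_⟩
      have hk' : (round (2 ^ N * x) : ℝ) = k + 1 := by exact_mod_cast (by omega : round (2 ^ N * x) = k + 1)
      rw [hk'] at h
      field_simp
      linarith

lemma isLocalMax_iff_exists_Icc {g : ℝ → ℝ} {x : ℝ} (hx : x ∈ Ioo (0 : ℝ) 1) :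
    IsLocalMax g x ↔ ∃ ε > 0, ∀ y ∈ Icc (0 : ℝ) 1, |y - x| < ε → g y ≤ g x := by
  constructor
  · intro h
    obtain ⟨ε, hε, hball⟩ := Metric.eventually_nhds_iff.1 h
    exact ⟨ε, hε, fun y _ hy => hball (by rwa [Real.dist_eq])⟩
  · rintro ⟨ε, hε, h⟩
    filter_upwards [Icc_mem_nhds hx.1 hx.2, Metric.ball_mem_nhds x hε] with y hy hball
    exact h y hy (by rwa [Metric.mem_ball, Real.dist_eq] at hball)

theorem knopp_local_maxima (α : ℝ) (hα : 0 < α) (hα1 : α < 1) :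
    ∀ x ∈ Set.Ioo (0:ℝ) 1,
      ((∃ ε > 0, ∀ y ∈ Set.Icc (0:ℝ) 1, |y - x| < ε → Knopp α y ≤ Knopp α x) ↔ inS x) := by
  intro x hx
  have hb : 1 / 2 < (2 : ℝ) ^ (-α) := by
    rw [show (1 / 2 : ℝ) = 2 ^ (-1 : ℝ) by norm_num]
    exact Real.rpow_lt_rpow_of_exponent_lt (by norm_num) (by linarith)
  have hb1 : (2 : ℝ) ^ (-α) < 1 := Real.rpow_lt_one_of_one_lt_of_neg (by norm_num) (by linarith)
  rw [knopp_eq_takagiLandsberg, ← isLocalMax_iff_exists_Icc hx, isLocalMax_takagiLandsberg_iff hb hb1,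
    inS_iff hx]
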